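/- arXiv:2410.21600 — 2 statements merged into one kernel-verified Lean document; each statement's English description precedes it below -/
import Mathlib

section
/- Let S be an association scheme of size d on a finite set X. For all i, j in [d], the set R_i R_j := {R_ℓ ∈ S | p^ℓ_{ij} > 0} satisfies |R_i R_j| ≤ gcd(k_i, k_j). -/
/-- An association scheme of size `d` on a finite set `X`:
a partition `R_0, …, R_d` of `X × X` into nonempty relations with `R_0` the
diagonal, closed under transposition (`transp`), and with well-defined
intersection numbers `pnum i j ℓ = p^ℓ_{ij}`. -/
structure AssocScheme (X : Type) [Fintype X] [DecidableEq X] (d : ℕ) where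
  rel : Fin (d + 1) → Finset (X × X)
  rel_nonempty : ∀ i, (rel i).Nonempty
  partition : ∀ p : X × X, ∃! i, p ∈ rel i
  diag : ∀ p : X × X, p ∈ rel 0 ↔ p.1 = p.2
  transp : Fin (d + 1) → Fin (d + 1)
  transp_mem : ∀ i p, p ∈ rel (transp i) ↔ (p.2, p.1) ∈ rel i
  pnum : Fin (d + 1) → Fin (d + 1) → Fin (d + 1) → ℕ
  pnum_spec : ∀ i j ℓ, ∀ q ∈ rel ℓ,
    pnum i j ℓ =
      (Finset.univ.filter (fun z : X => (q.1, z) ∈ rel i ∧ (z, q.2) ∈ rel j)).card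

namespace AssocScheme

variable {X : Type} [Fintype X] [DecidableEq X] {d : ℕ}

/-- The valency `k_i := p^0_{i i'}` of the relation `R_i`. -/
def k (S : AssocScheme X d) (i : Fin (d + 1)) : ℕ := S.pnum i (S.transp i) 0

end AssocScheme

/-! Counting the triangles `(x, y) ∈ R_i`, `(y, z) ∈ R_j`, `(x, z) ∈ R_ℓ` through a fixed `y` gives
`k_i p^i_{ℓ j'} = k_j p^j_{i' ℓ}`, so `k_j / gcd(k_i, k_j)` divides `p^i_{ℓ j'}`. For `R_ℓ ∈ R_i R_j`
this number is positive, and `∑_ℓ p^i_{ℓ j'} = k_j`; hence `R_i R_j` has at most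
`k_j / (k_j / gcd(k_i, k_j)) = gcd(k_i, k_j)` members. -/

theorem Nat.div_gcd_dvd_of_mul_eq_mul {m n x y : ℕ} (hn : 0 < n) (h : m * x = n * y) :
    n / m.gcd n ∣ x := by
  have hg : 0 < m.gcd n := Nat.gcd_pos_of_pos_right m hn
  refine (Nat.coprime_div_gcd_div_gcd hg).symm.dvd_of_dvd_mul_left ⟨y, ?_⟩
  refine Nat.eq_of_mul_eq_mul_right hg ?_
  calc m / m.gcd n * x * m.gcd n = m * x := by
        rw [mul_right_comm, Nat.div_mul_cancel (Nat.gcd_dvd_left m n)]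
    _ = n * y := h
    _ = n / m.gcd n * y * m.gcd n := by
        rw [mul_right_comm, Nat.div_mul_cancel (Nat.gcd_dvd_right m n)]

namespace AssocScheme

open Finset

variable {X : Type} [Fintype X] [DecidableEq X] {d : ℕ} (S : AssocScheme X d)

theorem fintype_card_pos (S : AssocScheme X d) : 0 < Fintype.card X :=
  Fintype.card_pos_iff.2 ⟨(S.rel_nonempty 0).choose.1⟩

theorem sum_card_filter_mem_rel (x : X) (s : Finset X) :
    ∑ ℓ, #{z ∈ s | (x, z) ∈ S.rel ℓ} = #s := by
  rw [card_eq_sum_card_fiberwise (f := fun z => (S.partition (x, z)).choose) (t := univ)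
    (fun _ _ => mem_univ _)]
  refine sum_congr rfl fun ℓ _ => congrArg card (filter_congr fun z _ => ?_)
  exact ⟨fun h => ((S.partition _).choose_spec.2 ℓ h).symm,
    fun h => h ▸ (S.partition _).choose_spec.1⟩

theorem k_eq_card_out (i : Fin (d + 1)) (x : X) : S.k i = #{z | (x, z) ∈ S.rel i} := by
  rw [k, S.pnum_spec i (S.transp i) 0 (x, x) ((S.diag _).2 rfl)]
  exact congrArg card (filter_congr fun z _ => and_iff_left_of_imp (S.transp_mem i (z, x)).2)

theorem k_pos (i : Fin (d + 1)) : 0 < S.k i := by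
  obtain ⟨⟨x, z⟩, hxz⟩ := S.rel_nonempty i
  rw [S.k_eq_card_out i x]
  exact card_pos.2 ⟨z, mem_filter.2 ⟨mem_univ _, hxz⟩⟩

theorem card_rel (i : Fin (d + 1)) : #(S.rel i) = Fintype.card X * S.k i := by
  calc #(S.rel i) = ∑ x : X, #{z | (x, z) ∈ S.rel i} := by
        rw [← filter_univ_mem (S.rel i), card_filter, Fintype.sum_prod_type]
        simp only [card_filter, mem_filter, mem_univ, true_and]
    _ = Fintype.card X * S.k i := by
        simp only [← S.k_eq_card_out, sum_const, card_univ, smul_eq_mul]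

theorem k_transp (i : Fin (d + 1)) : S.k (S.transp i) = S.k i := by
  have h : #(S.rel (S.transp i)) = #(S.rel i) :=
    card_nbij' Prod.swap Prod.swap (fun p hp => (S.transp_mem i p).1 hp)
      (fun p hp => (S.transp_mem i p.swap).2 hp) (fun _ _ => rfl) (fun _ _ => rfl)
  rw [S.card_rel, S.card_rel] at h
  exact Nat.eq_of_mul_eq_mul_left S.fintype_card_pos h

theorem k_eq_card_in (i : Fin (d + 1)) (y : X) : S.k i = #{x | (x, y) ∈ S.rel i} := by
  rw [← S.k_transp, S.k_eq_card_out _ y]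
  exact congrArg card (filter_congr fun x _ => S.transp_mem i (y, x))

theorem k_mul_pnum_eq_k_mul_pnum (i j ℓ : Fin (d + 1)) :
    S.k i * S.pnum ℓ (S.transp j) i = S.k j * S.pnum (S.transp i) ℓ j := by
  obtain ⟨⟨y, -⟩, -⟩ := S.rel_nonempty 0
  rw [S.k_eq_card_in i y, S.k_eq_card_out j y]
  refine card_mul_eq_card_mul (fun x z => (x, z) ∈ S.rel ℓ) (fun x hx => ?_) (fun z hz => ?_)
  · rw [S.pnum_spec ℓ (S.transp j) i (x, y) (mem_filter.1 hx).2, bipartiteAbove, filter_filter]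
    exact congrArg card (filter_congr fun z _ => by rw [S.transp_mem j, and_comm])
  · rw [S.pnum_spec (S.transp i) ℓ j (y, z) (mem_filter.1 hz).2, bipartiteBelow, filter_filter]
    exact congrArg card (filter_congr fun x _ => by rw [S.transp_mem i])

theorem pnum_pos_of_pos {i j ℓ : Fin (d + 1)} (h : 0 < S.pnum i j ℓ) :
    0 < S.pnum ℓ (S.transp j) i := by
  obtain ⟨⟨x, z⟩, hxz⟩ := S.rel_nonempty ℓ
  rw [S.pnum_spec i j ℓ _ hxz] at h
  obtain ⟨y, hy⟩ := card_pos.1 h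
  rw [mem_filter] at hy
  rw [S.pnum_spec ℓ (S.transp j) i (x, y) hy.2.1]
  exact card_pos.2 ⟨z, mem_filter.2 ⟨mem_univ _, hxz, (S.transp_mem j _).2 hy.2.2⟩⟩

theorem sum_pnum_left (i j : Fin (d + 1)) : ∑ ℓ, S.pnum ℓ j i = S.k j := by
  obtain ⟨⟨x, y⟩, hxy⟩ := S.rel_nonempty i
  rw [S.k_eq_card_in j y, ← S.sum_card_filter_mem_rel x]
  refine sum_congr rfl fun ℓ _ => ?_
  rw [S.pnum_spec ℓ j i _ hxy, filter_filter]
  exact congrArg card (filter_congr fun z _ => and_comm)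

theorem div_gcd_dvd_pnum (i j ℓ : Fin (d + 1)) :
    S.k j / (S.k i).gcd (S.k j) ∣ S.pnum ℓ (S.transp j) i :=
  Nat.div_gcd_dvd_of_mul_eq_mul (S.k_pos j) (S.k_mul_pnum_eq_k_mul_pnum i j ℓ)

end AssocScheme

theorem card_complex_product_le_gcd {X : Type} [Fintype X] [DecidableEq X] {d : ℕ}
    (S : AssocScheme X d) (i j : Fin (d + 1)) :
    ((Finset.univ.filter (fun ℓ : Fin (d + 1) => 0 < S.pnum i j ℓ)).image S.rel).card ≤
      Nat.gcd (S.k i) (S.k j) := by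
  set F := Finset.univ.filter (fun ℓ : Fin (d + 1) => 0 < S.pnum i j ℓ)
  set g := (S.k i).gcd (S.k j)
  have hg_dvd : g ∣ S.k j := Nat.gcd_dvd_right _ _
  have hb : 0 < S.k j / g :=
    Nat.div_pos (Nat.le_of_dvd (S.k_pos j) hg_dvd) (Nat.gcd_pos_of_pos_right _ (S.k_pos j))
  have hF : F.card * (S.k j / g) ≤ g * (S.k j / g) :=
    calc F.card * (S.k j / g) ≤ ∑ ℓ ∈ F, S.pnum ℓ (S.transp j) i :=
          Finset.card_nsmul_le_sum F _ _ fun ℓ hℓ =>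
            Nat.le_of_dvd (S.pnum_pos_of_pos (Finset.mem_filter.1 hℓ).2) (S.div_gcd_dvd_pnum i j ℓ)
      _ ≤ ∑ ℓ, S.pnum ℓ (S.transp j) i := Finset.sum_le_sum_of_subset (Finset.subset_univ F)
      _ = S.k j := by rw [S.sum_pnum_left, S.k_transp]
      _ = g * (S.k j / g) := (Nat.mul_div_cancel' hg_dvd).symm
  exact Finset.card_image_le.trans (Nat.le_of_mul_le_mul_right hF hb)
end

section
/- Let A be a finite-dimensional algebra over a field given as the path algebra of the quiver with vertices {0,1,...,r} (r ≥ 1), arrows α_i : i → 0 and β_i : 0 → i for 1 ≤ i ≤ r, modulo the relations α_i β_i = 0 for all 1 ≤ i ≤ r (composing left to right). Then the Jacobson radical of A satisfies rad(A)^3 = 0. -/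
/-- Generators for the star quiver algebra: idempotents `e i` for the vertices
`0, 1, …, r` (vertex `0` is the center, vertex `i.succ` the `i`-th outer vertex),
arrows `a i` (that is, `α_i : i → 0`) and `b i` (that is, `β_i : 0 → i`). -/
inductive StarGen (r : ℕ) : Type
  | e : Fin (r + 1) → StarGen r
  | a : Fin r → StarGen r
  | b : Fin r → StarGen r

/-- The defining relations of the star quiver algebra: the path algebra relations
(the vertex idempotents are orthogonal idempotents summing to `1`, and each arrow
is supported on its source and target vertices), together with the relations
`α_i β_i = 0` (the path through the center and back along the opposite pair of arrows). -/
inductive StarRel (K : Type) [Field K] (r : ℕ) :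
    FreeAlgebra K (StarGen r) → FreeAlgebra K (StarGen r) → Prop
  | idem (i j : Fin (r + 1)) :
      StarRel K r (FreeAlgebra.ι K (StarGen.e i) * FreeAlgebra.ι K (StarGen.e j))
        (if i = j then FreeAlgebra.ι K (StarGen.e i) else 0)
  | sum_e :
      StarRel K r (∑ i : Fin (r + 1), FreeAlgebra.ι K (StarGen.e i)) 1
  | alpha (i : Fin r) :
      StarRel K r
        (FreeAlgebra.ι K (StarGen.e 0) * FreeAlgebra.ι K (StarGen.a i) *
          FreeAlgebra.ι K (StarGen.e i.succ))
        (FreeAlgebra.ι K (StarGen.a i))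
  | beta (i : Fin r) :
      StarRel K r
        (FreeAlgebra.ι K (StarGen.e i.succ) * FreeAlgebra.ι K (StarGen.b i) *
          FreeAlgebra.ι K (StarGen.e 0))
        (FreeAlgebra.ι K (StarGen.b i))
  | zero_rel (i : Fin r) :
      StarRel K r (FreeAlgebra.ι K (StarGen.a i) * FreeAlgebra.ι K (StarGen.b i)) 0

/-- The star quiver algebra `Λ`: the path algebra of the quiver with vertices
`{0, 1, …, r}`, arrows `α_i : i → 0` and `β_i : 0 → i` for `1 ≤ i ≤ r`,
modulo the relations `α_i β_i = 0`. -/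
def StarAlgebra (K : Type) [Field K] (r : ℕ) : Type := RingQuot (StarRel K r)

noncomputable instance (K : Type) [Field K] (r : ℕ) : Ring (StarAlgebra K r) :=
  inferInstanceAs (Ring (RingQuot (StarRel K r)))

noncomputable instance (K : Type) [Field K] (r : ℕ) : Algebra K (StarAlgebra K r) :=
  inferInstanceAs (Algebra K (RingQuot (StarRel K r)))

/-! The algebra is spanned by the vertex idempotents `e i` together with the paths of positive
length that survive the relations, `α i`, `β i` and `β i * α j`. A product of three of the
latter vanishes, since `α i * t = 0` for each such path `t` and `β i * β j = 0`. Each vertex `k`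
gives a character `Λ → K` whose kernel is maximal, so the radical lies in the common kernel of
these characters, which is the span of the paths of positive length. -/

open scoped Pointwise

namespace Submodule

variable {K A : Type*} [CommSemiring K] [Semiring A] [Algebra K A] {S : Set A}

theorem mul_mem_span_of_mul_mem_span (hS : ∀ s ∈ S, ∀ t ∈ S, s * t ∈ span K S) {x y : A}
    (hx : x ∈ span K S) (hy : y ∈ span K S) : x * y ∈ span K S := by
  have hxy : x * y ∈ span K (S * S) := span_mul_span K S S ▸ mul_mem_mul hx hy
  refine span_le.2 ?_ hxy
  rintro _ ⟨s, hs, t, ht, rfl⟩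
  exact hS s hs t ht

theorem mul_mul_eq_zero_of_mem_span (hS : ∀ s ∈ S, ∀ t ∈ S, ∀ u ∈ S, s * t * u = 0)
    {x y z : A} (hx : x ∈ span K S) (hy : y ∈ span K S) (hz : z ∈ span K S) :
    x * y * z = 0 := by
  have hxyz : x * y * z ∈ span K (S * S * S) := by
    rw [← span_mul_span, ← span_mul_span]
    exact mul_mem_mul (mul_mem_mul hx hy) hz
  refine (mem_bot K).1 (span_le.2 ?_ hxyz)
  rintro _ ⟨_, ⟨s, hs, t, ht, rfl⟩, u, hu, rfl⟩
  exact hS s hs t ht u hu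

end Submodule

namespace StarAlgebra

variable {K : Type} [Field K] {r : ℕ}

noncomputable def mkAlgHom (K : Type) [Field K] (r : ℕ) :
    FreeAlgebra K (StarGen r) →ₐ[K] StarAlgebra K r :=
  RingQuot.mkAlgHom K (StarRel K r)

noncomputable def e (i : Fin (r + 1)) : StarAlgebra K r :=
  mkAlgHom K r (FreeAlgebra.ι K (StarGen.e i))

noncomputable def α (i : Fin r) : StarAlgebra K r :=
  mkAlgHom K r (FreeAlgebra.ι K (StarGen.a i))

noncomputable def β (i : Fin r) : StarAlgebra K r :=
  mkAlgHom K r (FreeAlgebra.ι K (StarGen.b i))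

theorem e_mul_e (i j : Fin (r + 1)) :
    (e i : StarAlgebra K r) * e j = if i = j then e i else 0 := by
  have h := RingQuot.mkAlgHom_rel K (StarRel.idem (K := K) (r := r) i j)
  rw [map_mul, apply_ite (RingQuot.mkAlgHom K (StarRel K r)), map_zero] at h
  exact h

theorem sum_e : ∑ i, (e i : StarAlgebra K r) = 1 := by
  have h := RingQuot.mkAlgHom_rel K (StarRel.sum_e (K := K) (r := r))
  rw [map_sum, map_one] at h
  exact h

theorem e_mul_α_mul_e (i : Fin r) : (e 0 : StarAlgebra K r) * α i * e i.succ = α i := by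
  have h := RingQuot.mkAlgHom_rel K (StarRel.alpha (K := K) (r := r) i)
  rw [map_mul, map_mul] at h
  exact h

theorem e_mul_β_mul_e (i : Fin r) : (e i.succ : StarAlgebra K r) * β i * e 0 = β i := by
  have h := RingQuot.mkAlgHom_rel K (StarRel.beta (K := K) (r := r) i)
  rw [map_mul, map_mul] at h
  exact h

theorem α_mul_β_self (i : Fin r) : (α i : StarAlgebra K r) * β i = 0 := by
  have h := RingQuot.mkAlgHom_rel K (StarRel.zero_rel (K := K) (r := r) i)
  rw [map_mul, map_zero] at h
  exact h

theorem e_mul_α (j : Fin (r + 1)) (i : Fin r) :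
    (e j : StarAlgebra K r) * α i = if j = 0 then α i else 0 := by
  rw [← e_mul_α_mul_e, ← mul_assoc, ← mul_assoc, e_mul_e]
  split_ifs with h
  · rw [h]
  · rw [zero_mul, zero_mul]

theorem α_mul_e (i : Fin r) (j : Fin (r + 1)) :
    (α i : StarAlgebra K r) * e j = if i.succ = j then α i else 0 := by
  rw [← e_mul_α_mul_e, mul_assoc, e_mul_e]
  split_ifs
  · rfl
  · rw [mul_zero]

theorem e_mul_β (j : Fin (r + 1)) (i : Fin r) :
    (e j : StarAlgebra K r) * β i = if j = i.succ then β i else 0 := by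
  rw [← e_mul_β_mul_e, ← mul_assoc, ← mul_assoc, e_mul_e]
  split_ifs with h
  · rw [h]
  · rw [zero_mul, zero_mul]

theorem β_mul_e (i : Fin r) (j : Fin (r + 1)) :
    (β i : StarAlgebra K r) * e j = if 0 = j then β i else 0 := by
  rw [← e_mul_β_mul_e, mul_assoc, e_mul_e]
  split_ifs
  · rfl
  · rw [mul_zero]

theorem α_mul_α (i j : Fin r) : (α i : StarAlgebra K r) * α j = 0 := by
  rw [← e_mul_α_mul_e j, ← mul_assoc, ← mul_assoc, α_mul_e, if_neg (Fin.succ_ne_zero i),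
    zero_mul, zero_mul]

theorem β_mul_β (i j : Fin r) : (β i : StarAlgebra K r) * β j = 0 := by
  rw [← e_mul_β_mul_e j, ← mul_assoc, ← mul_assoc, β_mul_e,
    if_neg (Fin.succ_ne_zero j).symm, zero_mul, zero_mul]

theorem α_mul_β (i j : Fin r) : (α i : StarAlgebra K r) * β j = 0 := by
  obtain rfl | hij := eq_or_ne i j
  · exact α_mul_β_self i
  · rw [← e_mul_β_mul_e j, ← mul_assoc, ← mul_assoc, α_mul_e,
      if_neg ((Fin.succ_injective _).ne hij), zero_mul, zero_mul]

def arrowPaths : Set (StarAlgebra K r) :=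
  Set.range α ∪ Set.range β ∪ Set.range fun ij : Fin r × Fin r => β ij.1 * α ij.2

def paths : Set (StarAlgebra K r) := Set.range e ∪ arrowPaths

theorem e_mem_paths (i : Fin (r + 1)) : (e i : StarAlgebra K r) ∈ paths :=
  Or.inl ⟨i, rfl⟩

theorem α_mem_paths (i : Fin r) : (α i : StarAlgebra K r) ∈ paths :=
  Or.inr (Or.inl (Or.inl ⟨i, rfl⟩))

theorem β_mem_paths (i : Fin r) : (β i : StarAlgebra K r) ∈ paths :=
  Or.inr (Or.inl (Or.inr ⟨i, rfl⟩))

theorem β_mul_α_mem_paths (i j : Fin r) : (β i * α j : StarAlgebra K r) ∈ paths :=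
  Or.inr (Or.inr ⟨(i, j), rfl⟩)

theorem α_mul_eq_zero_of_mem_arrowPaths (i : Fin r) {t : StarAlgebra K r}
    (ht : t ∈ arrowPaths) : α i * t = 0 := by
  rcases ht with (⟨j, rfl⟩ | ⟨j, rfl⟩) | ⟨⟨j, k⟩, rfl⟩
  · exact α_mul_α i j
  · exact α_mul_β i j
  · rw [← mul_assoc, α_mul_β, zero_mul]

theorem mul_mul_eq_zero_of_mem_arrowPaths {s t u : StarAlgebra K r} (hs : s ∈ arrowPaths)
    (ht : t ∈ arrowPaths) (hu : u ∈ arrowPaths) : s * t * u = 0 := by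
  rcases hs with (⟨i, rfl⟩ | ⟨i, rfl⟩) | ⟨⟨i, j⟩, rfl⟩
  · rw [α_mul_eq_zero_of_mem_arrowPaths i ht, zero_mul]
  · rcases ht with (⟨j, rfl⟩ | ⟨j, rfl⟩) | ⟨⟨j, k⟩, rfl⟩
    · rw [mul_assoc, α_mul_eq_zero_of_mem_arrowPaths j hu, mul_zero]
    · rw [β_mul_β, zero_mul]
    · rw [← mul_assoc, β_mul_β, zero_mul, zero_mul]
  · rw [mul_assoc (β i), α_mul_eq_zero_of_mem_arrowPaths j ht, mul_zero, zero_mul]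

theorem ite_mem_span_paths (p : Prop) [Decidable p] {x : StarAlgebra K r} (hx : x ∈ paths) :
    (if p then x else 0) ∈ Submodule.span K paths := by
  split_ifs
  exacts [Submodule.subset_span hx, zero_mem _]

theorem mul_mem_span_paths {s t : StarAlgebra K r} (hs : s ∈ paths) (ht : t ∈ paths) :
    s * t ∈ Submodule.span K paths := by
  rcases hs with ⟨i, rfl⟩ | hs <;> rcases ht with ⟨j, rfl⟩ | ht
  · rw [e_mul_e]
    exact ite_mem_span_paths _ (e_mem_paths i)
  · rcases ht with (⟨j, rfl⟩ | ⟨j, rfl⟩) | ⟨⟨j, k⟩, rfl⟩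
    · rw [e_mul_α]; exact ite_mem_span_paths _ (α_mem_paths j)
    · rw [e_mul_β]; exact ite_mem_span_paths _ (β_mem_paths j)
    · rw [← mul_assoc, e_mul_β, ite_mul, zero_mul]
      exact ite_mem_span_paths _ (β_mul_α_mem_paths j k)
  · rcases hs with (⟨i, rfl⟩ | ⟨i, rfl⟩) | ⟨⟨i, k⟩, rfl⟩
    · rw [α_mul_e]; exact ite_mem_span_paths _ (α_mem_paths i)
    · rw [β_mul_e]; exact ite_mem_span_paths _ (β_mem_paths i)
    · rw [mul_assoc, α_mul_e, mul_ite, mul_zero]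
      exact ite_mem_span_paths _ (β_mul_α_mem_paths i k)
  · rcases hs with (⟨i, rfl⟩ | ⟨i, rfl⟩) | ⟨⟨i, k⟩, rfl⟩
    · rw [α_mul_eq_zero_of_mem_arrowPaths i ht]; exact zero_mem _
    · rcases ht with (⟨j, rfl⟩ | ⟨j, rfl⟩) | ⟨⟨j, k⟩, rfl⟩
      · exact Submodule.subset_span (β_mul_α_mem_paths i j)
      · rw [β_mul_β]; exact zero_mem _
      · rw [← mul_assoc, β_mul_β, zero_mul]; exact zero_mem _
    · rw [mul_assoc, α_mul_eq_zero_of_mem_arrowPaths k ht, mul_zero]; exact zero_mem _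

theorem mem_span_paths (x : StarAlgebra K r) : x ∈ Submodule.span K paths := by
  obtain ⟨x, rfl⟩ : ∃ y, mkAlgHom K r y = x := RingQuot.mkAlgHom_surjective K (StarRel K r) x
  induction x using FreeAlgebra.induction with
  | grade0 c =>
    rw [AlgHom.commutes, Algebra.algebraMap_eq_smul_one, ← sum_e, Finset.smul_sum]
    exact Submodule.sum_mem _ fun i _ ↦
      Submodule.smul_mem _ _ (Submodule.subset_span (e_mem_paths i))
  | grade1 g =>
    refine Submodule.subset_span ?_
    cases g with
    | e i => exact e_mem_paths i
    | a i => exact α_mem_paths i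
    | b i => exact β_mem_paths i
  | mul x y hx hy =>
    rw [map_mul]
    exact Submodule.mul_mem_span_of_mul_mem_span (fun s hs t ht ↦ mul_mem_span_paths hs ht) hx hy
  | add x y hx hy =>
    rw [map_add]
    exact add_mem hx hy

def vertexIndicator (k : Fin (r + 1)) : StarGen r → K
  | .e i => if i = k then 1 else 0
  | .a _ => 0
  | .b _ => 0

theorem lift_vertexIndicator_rel (k : Fin (r + 1)) ⦃x y : FreeAlgebra K (StarGen r)⦄
    (h : StarRel K r x y) :
    FreeAlgebra.lift K (vertexIndicator (K := K) k) x =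
      FreeAlgebra.lift K (vertexIndicator k) y := by
  cases h with
  | idem i j =>
    rw [map_mul, apply_ite (FreeAlgebra.lift K _), map_zero]
    split_ifs with hij
    · simp [hij, vertexIndicator]
    · simp only [FreeAlgebra.lift_ι_apply, vertexIndicator]
      split_ifs <;> simp_all
  | _ => simp [vertexIndicator]

noncomputable def vertexChar (k : Fin (r + 1)) : StarAlgebra K r →ₐ[K] K :=
  RingQuot.liftAlgHom K ⟨FreeAlgebra.lift K (vertexIndicator k), lift_vertexIndicator_rel k⟩

theorem vertexChar_mkAlgHom_ι (k : Fin (r + 1)) (g : StarGen r) :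
    vertexChar k (mkAlgHom K r (FreeAlgebra.ι K g)) = vertexIndicator k g :=
  (RingQuot.liftAlgHom_mkAlgHom_apply K _ _ _).trans (FreeAlgebra.lift_ι_apply _ _)

theorem vertexChar_e (k i : Fin (r + 1)) :
    vertexChar k (e i : StarAlgebra K r) = if i = k then 1 else 0 :=
  vertexChar_mkAlgHom_ι k _

theorem vertexChar_eq_zero_of_mem_arrowPaths (k : Fin (r + 1)) {x : StarAlgebra K r}
    (hx : x ∈ arrowPaths) : vertexChar k x = 0 := by
  rcases hx with (⟨i, rfl⟩ | ⟨i, rfl⟩) | ⟨⟨i, j⟩, rfl⟩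
  · exact vertexChar_mkAlgHom_ι k _
  · exact vertexChar_mkAlgHom_ι k _
  · rw [map_mul, β, vertexChar_mkAlgHom_ι, vertexIndicator, zero_mul]

theorem sub_sum_vertexChar_smul_e_mem (x : StarAlgebra K r) :
    x - ∑ k, vertexChar k x • e k ∈ Submodule.span K arrowPaths := by
  induction mem_span_paths x using Submodule.span_induction with
  | mem t ht =>
    rcases ht with ⟨i, rfl⟩ | ht
    · simp [vertexChar_e]
    · simpa [vertexChar_eq_zero_of_mem_arrowPaths _ ht] using Submodule.subset_span ht
  | zero => simp
  | add x y _ _ hx hy =>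
    convert add_mem hx hy using 1
    simp only [map_add, add_smul, Finset.sum_add_distrib]
    abel
  | smul c x _ hx =>
    convert Submodule.smul_mem _ c hx using 1
    simp only [map_smul, smul_eq_mul, mul_smul, smul_sub, Finset.smul_sum]

theorem jacobson_bot_le_ker_vertexChar (k : Fin (r + 1)) :
    (⊥ : Ideal (StarAlgebra K r)).jacobson ≤ RingHom.ker (vertexChar k) :=
  sInf_le ⟨bot_le, RingHom.ker_isMaximal_of_surjective _
    fun c ↦ ⟨algebraMap K _ c, AlgHom.commutes _ c⟩⟩

theorem mem_span_arrowPaths_of_mem_jacobson {x : StarAlgebra K r}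
    (hx : x ∈ (⊥ : Ideal (StarAlgebra K r)).jacobson) : x ∈ Submodule.span K arrowPaths := by
  have hχ (k : Fin (r + 1)) : vertexChar k x = 0 := jacobson_bot_le_ker_vertexChar k hx
  simpa [hχ] using sub_sum_vertexChar_smul_e_mem x

end StarAlgebra

theorem starAlgebra_radical_cube_zero_general (K : Type) [Field K] (r : ℕ) :
    ∀ a b c : StarAlgebra K r,
      a ∈ (⊥ : Ideal (StarAlgebra K r)).jacobson →
      b ∈ (⊥ : Ideal (StarAlgebra K r)).jacobson →
      c ∈ (⊥ : Ideal (StarAlgebra K r)).jacobson →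
      a * b * c = 0 := fun _ _ _ ha hb hc ↦
  Submodule.mul_mul_eq_zero_of_mem_span
    (fun _ hs _ ht _ hu ↦ StarAlgebra.mul_mul_eq_zero_of_mem_arrowPaths hs ht hu)
    (StarAlgebra.mem_span_arrowPaths_of_mem_jacobson ha)
    (StarAlgebra.mem_span_arrowPaths_of_mem_jacobson hb)
    (StarAlgebra.mem_span_arrowPaths_of_mem_jacobson hc)

/-- The Jacobson radical of the star quiver algebra `Λ` satisfies `rad(Λ)³ = 0`. -/
theorem starAlgebra_radical_cube_zero (K : Type) [Field K] (r : ℕ) (hr : 1 ≤ r) :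
    ∀ a b c : StarAlgebra K r,
      a ∈ (⊥ : Ideal (StarAlgebra K r)).jacobson →
      b ∈ (⊥ : Ideal (StarAlgebra K r)).jacobson →
      c ∈ (⊥ : Ideal (StarAlgebra K r)).jacobson →
      a * b * c = 0 :=
  starAlgebra_radical_cube_zero_general K r
end
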